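/- The sequence {x_n} in M = [−1,1] ⊆ ℝ defined by x_n = 0 if n is a perfect square and x_n = 1 − 1/n otherwise, is statistically maximizing in M (with witness x = 0 and δ(0,M) = 1) but is not a maximizing sequence. -/

import Mathlib

open Filter
open scoped Classical

/-- Farthest distance from `x` to a set `M ⊆ ℝ`. -/
noncomputable def fdist (x : ℝ) (M : Set ℝ) : ℝ :=
  sSup ((fun m => |x - m|) '' M)

/-- Statistical convergence of a real sequence. -/
def StatConv (x : ℕ → ℝ) (a : ℝ) : Prop :=
  ∀ ε > 0, Tendsto (fun n : ℕ =>
    (((Finset.range n).filter (fun k => ε ≤ |x k - a|)).card : ℝ) / n)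
    atTop (nhds 0)

/-!
Off the perfect squares `x n = 1 - 1 / n`, so `|x n| → 1 = fdist 0 [-1, 1]` along the
complement of the squares, a set of density one (there are at most `√n + 1` squares below `n`);
this gives statistical convergence. Along the squares, however, `|x n - p| = |p|`, which is
strictly smaller than `fdist p [-1, 1] = max |p + 1| |p - 1|`, so no `p` makes the sequence
maximizing.
-/

open Finset Topology

theorem fdist_Icc (p : ℝ) {a b : ℝ} (hab : a ≤ b) :
    fdist p (Set.Icc a b) = max |p - a| |p - b| := by
  refine IsGreatest.csSup_eq ⟨?_, ?_⟩
  · rcases max_choice |p - a| |p - b| with h | h <;> rw [h]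
    exacts [⟨a, Set.left_mem_Icc.2 hab, rfl⟩, ⟨b, Set.right_mem_Icc.2 hab, rfl⟩]
  · rintro _ ⟨m, ⟨ham, hmb⟩, rfl⟩
    rw [max_comm]
    exact abs_le_max_abs_abs (by linarith) (by linarith)

theorem abs_lt_fdist_Icc_neg_one_one (p : ℝ) : |p| < fdist p (Set.Icc (-1) 1) := by
  rw [fdist_Icc p (by norm_num), lt_max_iff]
  rcases le_total 0 p with hp | hp
  · left; rw [abs_of_nonneg hp, sub_neg_eq_add, abs_of_nonneg (by linarith)]; linarith
  · right; rw [abs_of_nonpos hp, abs_of_nonpos (by linarith)]; linarith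

theorem card_filter_range_sq_le (n : ℕ) :
    #{k ∈ range n | ∃ m : ℕ, k = m ^ 2} ≤ Nat.sqrt n + 1 := by
  calc #{k ∈ range n | ∃ m : ℕ, k = m ^ 2}
      ≤ #((range (Nat.sqrt n + 1)).image (· ^ 2)) := by
        refine card_le_card fun k hk => ?_
        obtain ⟨hkn, m, rfl⟩ := by simpa using hk
        exact mem_image.2 ⟨m, by simpa [Nat.lt_succ_iff, Nat.le_sqrt'] using hkn.le, rfl⟩
    _ ≤ Nat.sqrt n + 1 := card_image_le.trans (card_range _).le

theorem tendsto_card_filter_range_sq_div :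
    Tendsto (fun n : ℕ => (#{k ∈ range n | ∃ m : ℕ, k = m ^ 2} : ℝ) / n) atTop (𝓝 0) := by
  have hlim : Tendsto (fun n : ℕ => 1 / √(n : ℝ) + 1 / n) atTop (𝓝 0) := by
    simpa using ((tendsto_inv_atTop_zero.comp Real.tendsto_sqrt_atTop).comp
      tendsto_natCast_atTop_atTop).add tendsto_one_div_atTop_nhds_zero_nat
  refine squeeze_zero (fun n => by positivity) (fun n => ?_) hlim
  calc (#{k ∈ range n | ∃ m : ℕ, k = m ^ 2} : ℝ) / n ≤ (√(n : ℝ) + 1) / n := by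
        gcongr
        calc (#{k ∈ range n | ∃ m : ℕ, k = m ^ 2} : ℝ) ≤ (Nat.sqrt n : ℝ) + 1 := by
              exact_mod_cast card_filter_range_sq_le n
          _ ≤ √(n : ℝ) + 1 := by gcongr; exact Real.nat_sqrt_le_real_sqrt
    _ = 1 / √(n : ℝ) + 1 / n := by rw [add_div, Real.sqrt_div_self']

theorem StatConv.of_tendsto_inf_principal_compl {x : ℕ → ℝ} {a : ℝ} {S : Set ℕ}
    (hS : Tendsto (fun n : ℕ => (#{k ∈ range n | k ∈ S} : ℝ) / n) atTop (𝓝 0))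
    (hx : Tendsto x (atTop ⊓ 𝓟 Sᶜ) (𝓝 a)) : StatConv x a := by
  intro ε hε
  obtain ⟨N, hN⟩ := eventually_atTop.1 <|
    eventually_inf_principal.1 (Metric.tendsto_nhds.1 hx ε hε)
  have hcard (n : ℕ) : #{k ∈ range n | ε ≤ |x k - a|} ≤ #{k ∈ range n | k ∈ S} + N := by
    calc #{k ∈ range n | ε ≤ |x k - a|} ≤ #({k ∈ range n | k ∈ S} ∪ range N) := by
          refine card_le_card fun k hk => ?_
          simp only [mem_filter, mem_range, mem_union] at hk ⊢
          by_contra! h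
          exact hk.2.not_gt (hN k h.2 (h.1 hk.1))
      _ ≤ #{k ∈ range n | k ∈ S} + N := (card_union_le _ _).trans_eq (by rw [card_range])
  have hlim := hS.add (tendsto_const_div_atTop_nhds_zero_nat (N : ℝ))
  rw [add_zero] at hlim
  refine squeeze_zero (fun n => by positivity) (fun n => ?_) hlim
  rw [← add_div]
  gcongr
  exact_mod_cast hcard n

theorem stat_maximizing_not_maximizing :
    let x : ℕ → ℝ := fun n => if ∃ m : ℕ, n = m ^ 2 then 0 else 1 - 1 / n
    (fdist 0 (Set.Icc (-1 : ℝ) 1) = 1 ∧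
      StatConv (fun n => |x n - 0|) (fdist 0 (Set.Icc (-1 : ℝ) 1))) ∧
    ¬ ∃ p : ℝ, Tendsto (fun n => |x n - p|) atTop
        (nhds (fdist p (Set.Icc (-1 : ℝ) 1))) := by
  intro x
  have hfdist : fdist 0 (Set.Icc (-1 : ℝ) 1) = 1 := by norm_num [fdist_Icc]
  have hsq (m : ℕ) : x (m ^ 2) = 0 := if_pos ⟨m, rfl⟩
  have hnonsquares :
      Tendsto (fun n => |x n - 0|) (atTop ⊓ 𝓟 {n | ∃ m : ℕ, n = m ^ 2}ᶜ) (𝓝 1) := by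
    have hlim : Tendsto (fun n : ℕ => |1 - 1 / (n : ℝ) - 0|) atTop (𝓝 1) := by
      simpa using ((tendsto_const_nhds (x := (1 : ℝ))).sub
        tendsto_one_div_atTop_nhds_zero_nat).abs
    refine (hlim.mono_left inf_le_left).congr' ?_
    filter_upwards [mem_inf_of_right (mem_principal_self _)] with n hn
    rw [show x n = 1 - 1 / n from if_neg hn]
  refine ⟨⟨hfdist, ?_⟩, ?_⟩
  · rw [hfdist]
    exact .of_tendsto_inf_principal_compl tendsto_card_filter_range_sq_div hnonsquares
  · rintro ⟨p, hp⟩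
    have hsquares : Tendsto (fun m : ℕ => |x (m ^ 2) - p|) atTop (𝓝 |p|) := by
      simp [hsq]
    exact (abs_lt_fdist_Icc_neg_one_one p).ne'
      (tendsto_nhds_unique (hp.comp (tendsto_pow_atTop two_ne_zero)) hsquares)
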